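/- arXiv:2101.10743 — 5 statements merged into one kernel-verified Lean document; each statement's English description precedes it below -/
import Mathlib

section
/- If two regular spherical polygons with m and n sides (m > n ≥ 3) have equal side-lengths and both have interior angles at most π, then the interior angle of the m-gon is strictly greater than that of the n-gon. -/
/-- Side length of a regular spherical `n`-gon with interior angle `α`:
`s(n,α) = arccos((cos(2π/n) + cos²(α/2)) / sin²(α/2))`. -/
noncomputable def sphericalSide (n : ℕ) (α : ℝ) : ℝ :=
  Real.arccos ((Real.cos (2 * Real.pi / (n : ℝ)) + Real.cos (α / 2) ^ 2) / Real.sin (α / 2) ^ 2)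

/-- The arccos argument lies in `[-1, 1)` for an admissible regular polygon. -/
lemma sphericalArg_mem (n : ℕ) (α : ℝ) (hn : 3 ≤ n)
    (hl : ((n : ℝ) - 2) * Real.pi / (n : ℝ) < α) (hu : α ≤ Real.pi) :
    (Real.cos (2 * Real.pi / (n : ℝ)) + Real.cos (α / 2) ^ 2) / Real.sin (α / 2) ^ 2
      ∈ Set.Ico (-1 : ℝ) 1 := by
  have hπ := Real.pi_pos
  have hn3 : (3 : ℝ) ≤ (n : ℝ) := by exact_mod_cast hn
  have hnpos : (0 : ℝ) < n := by linarith
  have hα0 : 0 < α := by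
    have : 0 < ((n : ℝ) - 2) * Real.pi / (n : ℝ) :=
      div_pos (mul_pos (by linarith) hπ) (by linarith)
    linarith
  have hs : 0 < Real.sin (α / 2) :=
    Real.sin_pos_of_pos_of_lt_pi (by linarith) (by linarith)
  have hs2 : 0 < Real.sin (α / 2) ^ 2 := by positivity
  have hcs : Real.sin (α / 2) ^ 2 + Real.cos (α / 2) ^ 2 = 1 :=
    Real.sin_sq_add_cos_sq _
  constructor
  · rw [le_div_iff₀ hs2]
    have h1 : -1 ≤ Real.cos (2 * Real.pi / (n : ℝ)) := Real.neg_one_le_cos _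
    nlinarith [Real.cos_sq_le_one (α / 2)]
  · rw [div_lt_one hs2]
    -- cos(2π/n) < -cos α  ⟺  α > (n-2)π/n
    have hkey : Real.cos α < Real.cos (((n : ℝ) - 2) * Real.pi / (n : ℝ)) := by
      exact Real.cos_lt_cos_of_nonneg_of_le_pi
        (le_of_lt (div_pos (mul_pos (by linarith) hπ) (by linarith))) hu hl
    have harg : ((n : ℝ) - 2) * Real.pi / (n : ℝ) = Real.pi - 2 * Real.pi / (n : ℝ) := by
      field_simp
    rw [harg, Real.cos_pi_sub] at hkey
    have hcosα : Real.cos α = 2 * Real.cos (α / 2) ^ 2 - 1 := by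
      have h := Real.cos_two_mul (α / 2)
      rwa [show 2 * (α / 2) = α by ring] at h
    nlinarith

/-- If regular spherical polygons with `m > n ≥ 3` sides have equal side lengths and
interior angles at most π, then the `m`-gon has the strictly larger interior angle. -/
theorem angle_lt_of_equal_side (m n : ℕ) (α β : ℝ) (hn : 3 ≤ n) (hmn : n < m)
    (hαl : ((m : ℝ) - 2) * Real.pi / (m : ℝ) < α) (hαu : α ≤ Real.pi)
    (hβl : ((n : ℝ) - 2) * Real.pi / (n : ℝ) < β) (hβu : β ≤ Real.pi)
    (heq : sphericalSide m α = sphericalSide n β) :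
    β < α := by
  by_contra hcon
  push_neg at hcon  -- α ≤ β
  have hπ := Real.pi_pos
  have hm : 3 ≤ m := le_of_lt (lt_of_le_of_lt hn hmn)
  have hn3 : (3 : ℝ) ≤ (n : ℝ) := by exact_mod_cast hn
  have hm3 : (3 : ℝ) ≤ (m : ℝ) := by exact_mod_cast hm
  have hnm : (n : ℝ) < (m : ℝ) := by exact_mod_cast hmn
  have hα0 : 0 < α := by
    have : 0 < ((m : ℝ) - 2) * Real.pi / (m : ℝ) :=
      div_pos (mul_pos (by linarith) hπ) (by linarith)
    linarith
  have hβ0 : 0 < β := lt_of_lt_of_le hα0 hcon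
  have hsα : 0 < Real.sin (α / 2) :=
    Real.sin_pos_of_pos_of_lt_pi (by linarith) (by linarith)
  have hsβ : 0 < Real.sin (β / 2) :=
    Real.sin_pos_of_pos_of_lt_pi (by linarith) (by linarith)
  -- sin(α/2) ≤ sin(β/2)
  have hsle : Real.sin (α / 2) ≤ Real.sin (β / 2) := by
    apply Real.strictMonoOn_sin.monotoneOn ⟨by linarith, by linarith⟩
      ⟨by linarith, by linarith⟩ (by linarith)
  -- cos(2π/n) < cos(2π/m)
  have hcoslt : Real.cos (2 * Real.pi / (n : ℝ)) < Real.cos (2 * Real.pi / (m : ℝ)) := by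
    apply Real.cos_lt_cos_of_nonneg_of_le_pi (by positivity)
    · rw [div_le_iff₀ (by linarith)]; nlinarith
    · apply div_lt_div_of_pos_left (by positivity) (by linarith) hnm
  -- the key strict inequality between the arccos arguments
  have hkey :
      (Real.cos (2 * Real.pi / (n : ℝ)) + Real.cos (β / 2) ^ 2) / Real.sin (β / 2) ^ 2
        < (Real.cos (2 * Real.pi / (m : ℝ)) + Real.cos (α / 2) ^ 2) / Real.sin (α / 2) ^ 2 := by
    rw [div_lt_div_iff₀ (by positivity) (by positivity)]
    have h1 := Real.sin_sq_add_cos_sq (α / 2)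
    have h2 := Real.sin_sq_add_cos_sq (β / 2)
    have hsq : Real.sin (α / 2) ^ 2 ≤ Real.sin (β / 2) ^ 2 := by nlinarith
    have hA : 0 < (Real.cos (2 * Real.pi / (m : ℝ)) - Real.cos (2 * Real.pi / (n : ℝ)))
        * Real.sin (α / 2) ^ 2 := mul_pos (by linarith) (by positivity)
    have hB : 0 ≤ (Real.cos (2 * Real.pi / (m : ℝ)) + 1)
        * (Real.sin (β / 2) ^ 2 - Real.sin (α / 2) ^ 2) :=
      mul_nonneg (by linarith [Real.neg_one_le_cos (2 * Real.pi / (m : ℝ))]) (by linarith)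
    nlinarith
  have hma := sphericalArg_mem m α hm hαl hαu
  have hnb := sphericalArg_mem n β hn hβl hβu
  have : sphericalSide m α < sphericalSide n β := by
    unfold sphericalSide
    exact Real.strictAntiOn_arccos ⟨hnb.1, le_of_lt hnb.2⟩
      ⟨le_of_lt (lt_of_le_of_lt hnb.1 hkey), le_of_lt hma.2⟩ hkey
  linarith [this, heq.le]
end

section
/- The side-length s of any regular spherical n-gon with interior angle at most π satisfies 0 < s ≤ 2π/n, with equality only when the interior angle equals π (all sides lying on a great circle). -/
/-- The side length `s` of a regular spherical `n`-gon with interior angle at most `π`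
satisfies `0 < s ≤ 2π/n`, with equality only when the interior angle is `π`. -/
theorem side_le_two_pi_div (n : ℕ) (α : ℝ) (hn : 3 ≤ n)
    (hαl : ((n : ℝ) - 2) * Real.pi / (n : ℝ) < α) (hαu : α ≤ Real.pi) :
    0 < sphericalSide n α ∧ sphericalSide n α ≤ 2 * Real.pi / (n : ℝ) ∧
      (sphericalSide n α = 2 * Real.pi / (n : ℝ) → α = Real.pi) := by
  have hπ := Real.pi_pos
  have hn3 : (3 : ℝ) ≤ (n : ℝ) := by exact_mod_cast hn
  have hn0 : (0 : ℝ) < (n : ℝ) := by linarith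
  set C := Real.cos (2 * Real.pi / (n : ℝ)) with hC
  set c := Real.cos (α / 2) with hc
  set s := Real.sin (α / 2) with hs
  -- basic bounds on α
  have hα_pos : 0 < α := by
    have h1 : 0 < ((n : ℝ) - 2) * Real.pi / (n : ℝ) := div_pos (by nlinarith) hn0
    linarith
  have hhalf1 : 0 < α / 2 := by linarith
  have hhalf2 : α / 2 ≤ Real.pi / 2 := by linarith
  have hs_pos : 0 < s := Real.sin_pos_of_pos_of_lt_pi hhalf1 (by linarith)
  have hc_nonneg : 0 ≤ c :=
    Real.cos_nonneg_of_mem_Icc ⟨by linarith, hhalf2⟩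
  have hpyth : s ^ 2 + c ^ 2 = 1 := Real.sin_sq_add_cos_sq (α / 2)
  have h2n_pos : 0 < 2 * Real.pi / (n : ℝ) := by positivity
  have h2n_lt : 2 * Real.pi / (n : ℝ) < Real.pi := by
    rw [div_lt_iff₀ hn0]; nlinarith
  -- key: π - 2π/n = (n-2)π/n
  have hkey : Real.pi - 2 * Real.pi / (n : ℝ) = ((n : ℝ) - 2) * Real.pi / (n : ℝ) := by
    field_simp
  have hCneg1 : -1 < C := by
    have := Real.neg_one_le_cos (2 * Real.pi / (n : ℝ))
    rcases lt_or_eq_of_le this with h | h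
    · exact h
    · exfalso
      have := Real.arccos_cos (le_of_lt h2n_pos) (le_of_lt h2n_lt)
      rw [← h] at this
      simp [Real.arccos_neg_one] at this
      linarith
  -- cos α < -C (strict)
  have hcosα : Real.cos α < -C := by
    have := Real.cos_lt_cos_of_nonneg_of_le_pi (x := Real.pi - 2 * Real.pi / (n : ℝ))
      (y := α) (by linarith) hαu (by rw [hkey]; exact hαl)
    rwa [Real.cos_pi_sub] at this
  -- cos α = 2c² - 1
  have hcos2 : Real.cos α = 2 * c ^ 2 - 1 := by
    have h := Real.cos_sq (α / 2)
    have h2 : 2 * (α / 2) = α := by ring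
    rw [h2, ← hc] at h; nlinarith
  set A := (C + c ^ 2) / s ^ 2 with hA
  have hs2_pos : 0 < s ^ 2 := by positivity
  have hA_lt_one : A < 1 := by
    rw [div_lt_one hs2_pos]; nlinarith
  have hA_ge_C : C ≤ A := by
    rw [le_div_iff₀ hs2_pos]; nlinarith
  have hA_ge : -1 ≤ A := le_trans (le_of_lt hCneg1) hA_ge_C
  have harccosC : Real.arccos C = 2 * Real.pi / (n : ℝ) :=
    Real.arccos_cos (le_of_lt h2n_pos) (le_of_lt h2n_lt)
  have hanti : Real.arccos A ≤ Real.arccos C := by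
    unfold Real.arccos
    have := Real.monotone_arcsin hA_ge_C
    linarith
  have hside : sphericalSide n α = Real.arccos A := rfl
  refine ⟨by rw [hside]; exact Real.arccos_pos.mpr hA_lt_one,
    by rw [hside]; exact hanti.trans_eq harccosC, ?_⟩
  intro heq
  rw [hside] at heq
  have hAeqC : A = C := by
    have h1 : Real.cos (Real.arccos A) = A := Real.cos_arccos hA_ge (le_of_lt hA_lt_one)
    rw [heq, ← harccosC, Real.cos_arccos (le_of_lt hCneg1) (Real.cos_le_one _)] at h1
    exact h1.symm
  have hc0 : c = 0 := by
    have h2 : C + c ^ 2 = C * s ^ 2 := (div_eq_iff (ne_of_gt hs2_pos)).mp hAeqC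
    have h3 : C * (s ^ 2 + c ^ 2) = C * 1 := by rw [hpyth]
    have h4 : c ^ 2 * (1 + C) = 0 := by linear_combination h2 + h3
    have h5 : c ^ 2 = 0 := by
      rcases mul_eq_zero.mp h4 with h | h
      · exact h
      · exfalso; linarith
    exact pow_eq_zero_iff (by norm_num) |>.mp h5
  -- from cos(α/2) = 0 and 0 < α/2 ≤ π/2, get α/2 = π/2
  by_contra hne
  have hlt : α / 2 < Real.pi / 2 := lt_of_le_of_ne hhalf2 (by
    intro h; apply hne; linarith)
  have : 0 < c := Real.cos_pos_of_mem_Ioo ⟨by linarith, hlt⟩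
  linarith
end

section
/- There exist exactly three supp-same pairs of regular spherical polygons: (1) two triangles each with angle π/2 and side length π/2; (2) a triangle with angle arccos(1/3) and a square with angle arccos(−1/3), each of side length π/3; (3) a triangle with angle arctan-related value ≈63.435° and a pentagon with angle ≈116.565°, each of side length π/5. Precisely: for each pair type (3,3), (3,4), (3,5), there is a unique pair of regular spherical polygons with equal side lengths and supplementary angles. -/
/-- `x = (α, β)` is a supp-same pair of angles for regular spherical polygons with `p`
and `q` sides: both polygons exist, the angles are supplementary, and the side lengths
are equal. -/
noncomputable def SuppSame (p q : ℕ) (x : ℝ × ℝ) : Prop :=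
  ((p : ℝ) - 2) * Real.pi / (p : ℝ) < x.1 ∧ x.1 < Real.pi ∧
    ((q : ℝ) - 2) * Real.pi / (q : ℝ) < x.2 ∧ x.2 < Real.pi ∧
    x.1 + x.2 = Real.pi ∧ sphericalSide p x.1 = sphericalSide q x.2

open Real

/-- Rewrite the side length in terms of `cos α`. -/
lemma side_arg (n : ℕ) (α : ℝ) (h : Real.cos α ≠ 1) :
    sphericalSide n α =
      Real.arccos ((2 * Real.cos (2 * Real.pi / (n : ℝ)) + 1 + Real.cos α) / (1 - Real.cos α)) := by
  unfold sphericalSide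
  congr 1
  have hc : Real.cos (α / 2) ^ 2 = 1 / 2 + Real.cos α / 2 := by
    have := Real.cos_sq (α / 2)
    rwa [show 2 * (α / 2) = α by ring] at this
  have hs : Real.sin (α / 2) ^ 2 = 1 / 2 - Real.cos α / 2 := by
    rw [Real.sin_sq, hc]; ring
  rw [hc, hs]
  have h1 : (1 : ℝ) - Real.cos α ≠ 0 := by
    intro h0; apply h; linarith [sub_eq_zero.mp h0]
  have h2 : (1 : ℝ) / 2 - Real.cos α / 2 ≠ 0 := by
    intro h0; apply h1; linarith
  field_simp
  ring

lemma cos_two_pi_div_three : Real.cos (2 * Real.pi / 3) = -(1 / 2) := by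
  have : (2 : ℝ) * Real.pi / 3 = Real.pi - Real.pi / 3 := by ring
  rw [this, Real.cos_pi_sub, Real.cos_pi_div_three]

lemma cos_two_pi_div_five : Real.cos (2 * Real.pi / 5) = (Real.sqrt 5 - 1) / 4 := by
  have h : (2 : ℝ) * Real.pi / 5 = 2 * (Real.pi / 5) := by ring
  have h5 : Real.sqrt 5 ^ 2 = 5 := Real.sq_sqrt (by norm_num)
  rw [h, Real.cos_two_mul, Real.cos_pi_div_five]
  nlinarith [h5]

lemma two_pi_div_le {q : ℕ} (hq : 3 ≤ q) : 2 * Real.pi / (q : ℝ) ≤ 2 * Real.pi / 3 := by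
  have hq' : (3 : ℝ) ≤ (q : ℝ) := by exact_mod_cast hq
  have : (0:ℝ) < 3 := by norm_num
  apply div_le_div_of_nonneg_left (by positivity) (by norm_num) hq'

lemma B_lb {q : ℕ} (hq : 3 ≤ q) : -(1/2 : ℝ) ≤ Real.cos (2 * Real.pi / (q : ℝ)) := by
  have h1 : Real.cos (2 * Real.pi / 3) ≤ Real.cos (2 * Real.pi / (q : ℝ)) := by
    apply Real.cos_le_cos_of_nonneg_of_le_pi
    · positivity
    · linarith [Real.pi_pos]
    · exact two_pi_div_le hq
  rw [cos_two_pi_div_three] at h1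
  linarith

lemma two_pi_div_lt_pi {q : ℕ} (hq : 3 ≤ q) : 2 * Real.pi / (q : ℝ) < Real.pi := by
  have := two_pi_div_le hq
  linarith [Real.pi_pos]

/-- The key identity: any supp-same pair of type (3, q) satisfies a linear
equation for `cos x.1`. -/
lemma suppSame_cos_fst {q : ℕ} (hq : 3 ≤ q) {x : ℝ × ℝ} (h : SuppSame 3 q x) :
    (2 * Real.cos (2 * Real.pi / (q : ℝ)) + 3) * Real.cos x.1
      = 2 * Real.cos (2 * Real.pi / (q : ℝ)) + 1 := by
  obtain ⟨h1, h2, h3, h4, h5, h6⟩ := h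
  set B := Real.cos (2 * Real.pi / (q : ℝ)) with hB
  have hq0 : (0:ℝ) < (q : ℝ) := by positivity
  have hπ := Real.pi_pos
  have h1' : Real.pi / 3 < x.1 := by
    have : ((3:ℕ):ℝ) = 3 := by norm_num
    rw [this] at h1; linarith [h1]
  have hBlb : -(1/2 : ℝ) ≤ B := B_lb hq
  -- x.1 < 2π/q
  have hx1lt : x.1 < 2 * Real.pi / (q : ℝ) := by
    have hqe : ((q:ℝ) - 2) * Real.pi / (q : ℝ) = Real.pi - 2 * Real.pi / (q:ℝ) := by
      field_simp
    rw [hqe] at h3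
    linarith [h5, h3]
  have hcosgt : B < Real.cos x.1 := by
    apply Real.cos_lt_cos_of_nonneg_of_le_pi
    · linarith
    · exact (two_pi_div_lt_pi hq).le
    · exact hx1lt
  have hcoslt : Real.cos x.1 < 1 / 2 := by
    have := Real.cos_lt_cos_of_nonneg_of_le_pi (by positivity : (0:ℝ) ≤ Real.pi / 3) h2.le h1'
    rwa [Real.cos_pi_div_three] at this
  set v := Real.cos x.1 with hv
  have hvne : v ≠ 1 := by linarith
  have hx2 : x.2 = Real.pi - x.1 := by linarith
  have hcos2 : Real.cos x.2 = -v := by rw [hx2, Real.cos_pi_sub]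
  have hvne2 : Real.cos x.2 ≠ 1 := by rw [hcos2]; intro h0; nlinarith
  rw [side_arg 3 x.1 hvne, side_arg q x.2 hvne2] at h6
  have h3cast : ((3:ℕ):ℝ) = 3 := by norm_num
  rw [h3cast, cos_two_pi_div_three, hcos2] at h6
  rw [← hv, show (1:ℝ) - -v = 1 + v by ring] at h6
  -- arguments
  have hd1 : (0:ℝ) < 1 - v := by linarith
  have hd2 : (0:ℝ) < 1 + v := by linarith
  have harg : (2 * -(1/2) + 1 + v) / (1 - v) = (2 * B + 1 + -v) / (1 + v) := by
    apply Real.arccos_injOn _ _ h6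
    · constructor
      · rw [le_div_iff₀ hd1]; nlinarith
      · rw [div_le_one hd1]; nlinarith
    · constructor
      · rw [le_div_iff₀ hd2]; nlinarith
      · rw [div_le_one hd2]; nlinarith
  rw [div_eq_div_iff hd1.ne' hd2.ne'] at harg
  nlinarith [harg]

/-- Uniqueness of supp-same pairs of type (3, q). -/
lemma suppSame_unique {q : ℕ} (hq : 3 ≤ q) {x y : ℝ × ℝ}
    (hx : SuppSame 3 q x) (hy : SuppSame 3 q y) : x = y := by
  have hBlb : -(1/2 : ℝ) ≤ Real.cos (2 * Real.pi / (q : ℝ)) := B_lb hq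
  have hcx := suppSame_cos_fst hq hx
  have hcy := suppSame_cos_fst hq hy
  have hcoseq : Real.cos x.1 = Real.cos y.1 := by
    have hne : (2 * Real.cos (2 * Real.pi / (q : ℝ)) + 3) ≠ 0 := by linarith
    field_simp at hcx hcy
    have := hcx.trans hcy.symm
    exact mul_left_cancel₀ hne this
  obtain ⟨hx1, hx2, _, _, hx5, _⟩ := hx
  obtain ⟨hy1, hy2, _, _, hy5, _⟩ := hy
  have h3cast : ((3:ℕ):ℝ) = 3 := by norm_num
  rw [h3cast] at hx1 hy1
  have hπ := Real.pi_pos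
  have h1 : x.1 = y.1 := by
    apply Real.injOn_cos ⟨by linarith, hx2.le⟩ ⟨by linarith, hy2.le⟩ hcoseq
  have h2 : x.2 = y.2 := by linarith
  exact Prod.ext h1 h2

/-- Construction of supp-same pairs of type (3, q) from a cosine value. -/
lemma mk_suppSame {q : ℕ} (hq : 3 ≤ q) (v : ℝ) (hv1 : -1 < v) (hv2 : v < 1 / 2)
    (hvB : Real.cos (2 * Real.pi / (q : ℝ)) < v)
    (hside : sphericalSide 3 (Real.arccos v) = sphericalSide q (Real.arccos (-v))) :
    SuppSame 3 q (Real.arccos v, Real.arccos (-v)) := by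
  have hπ := Real.pi_pos
  have hv1' : (-1:ℝ) ≤ v := hv1.le
  have hv2' : v ≤ 1 := by linarith
  have hcv : Real.cos (Real.arccos v) = v := Real.cos_arccos hv1' hv2'
  have hnn := Real.arccos_nonneg v
  have hle := Real.arccos_le_pi v
  have haneg : Real.arccos (-v) = Real.pi - Real.arccos v := Real.arccos_neg v
  have hlt1 : Real.pi / 3 < Real.arccos v := by
    by_contra hcon
    push_neg at hcon
    have := Real.cos_le_cos_of_nonneg_of_le_pi hnn (by linarith) hcon
    rw [hcv, Real.cos_pi_div_three] at this
    linarith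
  have hltpi : Real.arccos v < Real.pi := by
    by_contra hcon
    push_neg at hcon
    have : Real.arccos v = Real.pi := le_antisymm hle hcon
    rw [this, Real.cos_pi] at hcv
    linarith
  have hlt2q : Real.arccos v < 2 * Real.pi / (q : ℝ) := by
    by_contra hcon
    push_neg at hcon
    have := Real.cos_le_cos_of_nonneg_of_le_pi (by positivity) hle hcon
    rw [hcv] at this
    linarith
  refine ⟨?_, hltpi, ?_, ?_, ?_, hside⟩
  · show (((3:ℕ):ℝ) - 2) * Real.pi / ((3:ℕ):ℝ) < Real.arccos v
    have h3cast : ((3:ℕ):ℝ) = 3 := by norm_num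
    rw [h3cast]
    linarith
  · show ((q:ℝ) - 2) * Real.pi / (q : ℝ) < Real.arccos (-v)
    have hq0 : (0:ℝ) < (q : ℝ) := by positivity
    have hqe : ((q:ℝ) - 2) * Real.pi / (q : ℝ) = Real.pi - 2 * Real.pi / (q:ℝ) := by
      field_simp
    rw [hqe, haneg]
    linarith
  · show Real.arccos (-v) < Real.pi
    rw [haneg]; linarith [Real.arccos_pos.mpr (by linarith : v < 1)]
  · show Real.arccos v + Real.arccos (-v) = Real.pi
    rw [haneg]; ring

/-- For each of the pair types triangle-triangle, triangle-square and triangle-pentagon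
there is a unique supp-same pair of regular spherical polygons: two right triangles of
side `π/2`; a triangle of angle `arccos(1/3)` and square of angle `arccos(-1/3)`, each
of side `π/3`; and a triangle-pentagon pair, each of side `π/5`. -/
theorem suppSame_classification :
    (∃! x : ℝ × ℝ, SuppSame 3 3 x) ∧
      SuppSame 3 3 (Real.pi / 2, Real.pi / 2) ∧
      sphericalSide 3 (Real.pi / 2) = Real.pi / 2 ∧
    (∃! x : ℝ × ℝ, SuppSame 3 4 x) ∧
      SuppSame 3 4 (Real.arccos (1 / 3), Real.arccos (-(1 / 3))) ∧
      sphericalSide 3 (Real.arccos (1 / 3)) = Real.pi / 3 ∧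
    (∃! x : ℝ × ℝ, SuppSame 3 5 x) ∧
      (∃ x : ℝ × ℝ, SuppSame 3 5 x ∧ sphericalSide 3 x.1 = Real.pi / 5) := by
  have hπ := Real.pi_pos
  have h3cast : ((3:ℕ):ℝ) = 3 := by norm_num
  have h4cast : ((4:ℕ):ℝ) = 4 := by norm_num
  have h5cast : ((5:ℕ):ℝ) = 5 := by norm_num
  have h5 : Real.sqrt 5 ^ 2 = 5 := Real.sq_sqrt (by norm_num)
  have h5nn : (0:ℝ) ≤ Real.sqrt 5 := Real.sqrt_nonneg 5
  have h5lt : Real.sqrt 5 < 3 := by nlinarith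
  have h5gt : 2 < Real.sqrt 5 := by nlinarith
  -- side values
  have hside33 : sphericalSide 3 (Real.pi / 2) = Real.pi / 2 := by
    rw [side_arg 3 (Real.pi / 2) (by rw [Real.cos_pi_div_two]; norm_num)]
    rw [h3cast, cos_two_pi_div_three, Real.cos_pi_div_two]
    norm_num [Real.arccos_zero]
  -- case (3,3)
  have hsup33 : SuppSame 3 3 (Real.pi / 2, Real.pi / 2) := by
    have := mk_suppSame (le_refl 3) 0 (by norm_num) (by norm_num)
      (by rw [h3cast, cos_two_pi_div_three]; norm_num) (by norm_num)
    rwa [neg_zero, Real.arccos_zero] at this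
  -- case (3,4)
  have hc13 : Real.cos (Real.arccos (1/3 : ℝ)) = 1/3 := Real.cos_arccos (by norm_num) (by norm_num)
  have hc13' : Real.cos (Real.arccos (-(1/3) : ℝ)) = -(1/3) :=
    Real.cos_arccos (by norm_num) (by norm_num)
  have hcos24 : Real.cos (2 * Real.pi / (4:ℝ)) = 0 := by
    rw [show (2:ℝ) * Real.pi / 4 = Real.pi / 2 by ring, Real.cos_pi_div_two]
  have hside34l : sphericalSide 3 (Real.arccos (1/3)) = Real.pi / 3 := by
    rw [side_arg 3 _ (by rw [hc13]; norm_num), h3cast, cos_two_pi_div_three, hc13]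
    rw [show (2 * -(1/2 : ℝ) + 1 + 1/3) / (1 - 1/3) = 1/2 by norm_num]
    rw [← Real.cos_pi_div_three, Real.arccos_cos (by positivity) (by linarith)]
  have hside34r : sphericalSide 4 (Real.arccos (-(1/3))) = Real.pi / 3 := by
    rw [side_arg 4 _ (by rw [hc13']; norm_num), h4cast, hcos24, hc13']
    rw [show (2 * (0:ℝ) + 1 + -(1/3)) / (1 - -(1/3)) = 1/2 by norm_num]
    rw [← Real.cos_pi_div_three, Real.arccos_cos (by positivity) (by linarith)]
  have hsup34 : SuppSame 3 4 (Real.arccos (1/3), Real.arccos (-(1/3))) := by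
    apply mk_suppSame (by norm_num) (1/3) (by norm_num) (by norm_num)
      (by rw [h4cast, hcos24]; norm_num)
    rw [hside34l, hside34r]
  -- case (3,5)
  have hcos25 : Real.cos (2 * Real.pi / (5:ℝ)) = (Real.sqrt 5 - 1) / 4 := cos_two_pi_div_five
  set w : ℝ := Real.sqrt 5 / 5 with hw
  have hw0 : (0:ℝ) < w := by rw [hw]; nlinarith
  have hw2 : w < 1/2 := by rw [hw]; nlinarith
  have hw1 : (-1:ℝ) < w := by linarith
  have hcw : Real.cos (Real.arccos w) = w := Real.cos_arccos (by linarith) (by linarith)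
  have hcw' : Real.cos (Real.arccos (-w)) = -w := Real.cos_arccos (by linarith) (by linarith)
  have hwB : Real.cos (2 * Real.pi / ((5:ℕ):ℝ)) < w := by
    rw [h5cast, hcos25, hw]; nlinarith
  have hargl : (2 * -(1/2 : ℝ) + 1 + w) / (1 - w) = (1 + Real.sqrt 5) / 4 := by
    rw [div_eq_div_iff ((by linarith : (0:ℝ) < 1 - w).ne') (by norm_num : (4:ℝ) ≠ 0)]
    rw [hw]; linear_combination (1/5 : ℝ) * h5
  have hside35l : sphericalSide 3 (Real.arccos w) = Real.pi / 5 := by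
    rw [side_arg 3 _ (by rw [hcw]; exact ne_of_lt (by linarith)), h3cast, cos_two_pi_div_three,
      hcw, hargl, ← Real.cos_pi_div_five, Real.arccos_cos (by positivity) (by linarith)]
  have hargr : (2 * ((Real.sqrt 5 - 1)/4) + 1 + -w) / (1 - -w) = (1 + Real.sqrt 5) / 4 := by
    rw [div_eq_div_iff ((by linarith : (0:ℝ) < 1 - -w).ne') (by norm_num : (4:ℝ) ≠ 0)]
    rw [hw]; linear_combination (-(1/5) : ℝ) * h5
  have hside35r : sphericalSide 5 (Real.arccos (-w)) = Real.pi / 5 := by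
    rw [side_arg 5 _ (by rw [hcw']; exact ne_of_lt (by linarith)), h5cast, hcos25, hcw', hargr,
      ← Real.cos_pi_div_five, Real.arccos_cos (by positivity) (by linarith)]
  have hsup35 : SuppSame 3 5 (Real.arccos w, Real.arccos (-w)) := by
    apply mk_suppSame (by norm_num) w hw1 hw2 hwB
    rw [hside35l, hside35r]
  refine ⟨⟨_, hsup33, fun y hy => suppSame_unique (le_refl 3) hy hsup33⟩, hsup33, hside33,
    ⟨_, hsup34, fun y hy => suppSame_unique (by norm_num) hy hsup34⟩, hsup34, hside34l,
    ⟨_, hsup35, fun y hy => suppSame_unique (by norm_num) hy hsup35⟩,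
    ⟨(Real.arccos w, Real.arccos (-w)), hsup35, hside35l⟩⟩
end

section
/- There exist angles α, β with α + β = π, π/3 < α < π/2 < β, such that the regular spherical triangle of angle α and the regular spherical pentagon of angle β both have side length π/5. Moreover β satisfies cos β = −1/√5 (so β = π − arccos(1/√5) ≈ 116.565°). -/
/-- There are supplementary angles `α`, `β` with `π/3 < α < π/2 < β` such that the
regular spherical triangle of angle `α` and the regular spherical pentagon of angle `β`
both have side length `π/5`; moreover `cos β = -1/√5`. -/
theorem tri_pent_suppSame :
    ∃ α β : ℝ, α + β = Real.pi ∧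
      Real.pi / 3 < α ∧ α < Real.pi / 2 ∧ Real.pi / 2 < β ∧
      sphericalSide 3 α = Real.pi / 5 ∧ sphericalSide 5 β = Real.pi / 5 ∧
      Real.cos β = -(1 / Real.sqrt 5) := by
  have hs : (0:ℝ) < Real.sqrt 5 := Real.sqrt_pos.2 (by norm_num)
  have h5 : Real.sqrt 5 ^ 2 = 5 := Real.sq_sqrt (by norm_num)
  have h2lt : (2:ℝ) < Real.sqrt 5 := by nlinarith
  have hx0 : (0:ℝ) < 1 / Real.sqrt 5 := by positivity
  have hxhalf : 1 / Real.sqrt 5 < 1 / 2 := by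
    rw [div_lt_div_iff₀ hs (by norm_num)]; nlinarith
  have hx1 : 1 / Real.sqrt 5 < 1 := by linarith
  set α := Real.arccos (1 / Real.sqrt 5) with hα
  have hcosα : Real.cos α = 1 / Real.sqrt 5 :=
    Real.cos_arccos (by linarith) (by linarith)
  have hαlt : α < Real.pi / 2 := Real.arccos_lt_pi_div_two.2 hx0
  have hαgt : Real.pi / 3 < α := by
    have h3 : Real.pi / 3 = Real.arccos (1 / 2) := by
      rw [← Real.cos_pi_div_three]
      exact (Real.arccos_cos (by positivity) (by linarith [Real.pi_pos])).symm
    rw [h3]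
    exact Real.strictAntiOn_arccos ⟨by linarith, hx1.le⟩
      ⟨by norm_num, by norm_num⟩ hxhalf
  refine ⟨α, Real.pi - α, by ring, hαgt, hαlt, by linarith, ?_, ?_, ?_⟩
  · -- triangle
    unfold sphericalSide
    have hcos2 : Real.cos (α / 2) ^ 2 = 1 / 2 + Real.cos α / 2 := by
      rw [Real.cos_sq]; ring_nf
    have hsin2 : Real.sin (α / 2) ^ 2 = 1 / 2 - Real.cos α / 2 := by
      have := Real.sin_sq_add_cos_sq (α / 2); linarith [hcos2]
    have hc3 : Real.cos (2 * Real.pi / (3:ℕ)) = -(1/2) := by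
      have : 2 * Real.pi / ((3:ℕ):ℝ) = Real.pi - Real.pi / 3 := by push_cast; ring
      rw [this, Real.cos_pi_sub, Real.cos_pi_div_three]
    rw [hc3, hcos2, hsin2, hcosα]
    have harg : (-(1/2) + (1 / 2 + 1 / Real.sqrt 5 / 2)) / (1 / 2 - 1 / Real.sqrt 5 / 2)
        = (1 + Real.sqrt 5) / 4 := by
      rw [div_eq_div_iff (by nlinarith) (by norm_num)]
      field_simp
      nlinarith
    rw [harg, ← Real.cos_pi_div_five]
    exact Real.arccos_cos (by positivity) (by linarith [Real.pi_pos])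
  · -- pentagon
    unfold sphericalSide
    set β := Real.pi - α
    have hcosβ : Real.cos β = -(1 / Real.sqrt 5) := by
      rw [Real.cos_pi_sub, hcosα]
    have hcos2 : Real.cos (β / 2) ^ 2 = 1 / 2 + Real.cos β / 2 := by
      rw [Real.cos_sq]; ring_nf
    have hsin2 : Real.sin (β / 2) ^ 2 = 1 / 2 - Real.cos β / 2 := by
      have := Real.sin_sq_add_cos_sq (β / 2); linarith [hcos2]
    have hc5 : Real.cos (2 * Real.pi / (5:ℕ)) = (Real.sqrt 5 - 1) / 4 := by
      have h : (2:ℝ) * Real.pi / ((5:ℕ):ℝ) = 2 * (Real.pi / 5) := by push_cast; ring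
      rw [h, Real.cos_two_mul, Real.cos_pi_div_five]
      nlinarith
    rw [hc5, hcos2, hsin2, hcosβ]
    have harg : ((Real.sqrt 5 - 1) / 4 + (1 / 2 + -(1 / Real.sqrt 5) / 2))
        / (1 / 2 - -(1 / Real.sqrt 5) / 2) = (1 + Real.sqrt 5) / 4 := by
      rw [div_eq_div_iff (by nlinarith) (by norm_num)]
      field_simp
      nlinarith
    rw [harg, ← Real.cos_pi_div_five]
    exact Real.arccos_cos (by positivity) (by linarith [Real.pi_pos])
  · rw [Real.cos_pi_sub, hcosα]
end

section
/- If two regular spherical triangles have supplementary angles α and π − α with π/3 < α ≤ π/2, then the sum of their side lengths s(3,α) + s(3,π−α) is strictly greater than (a computable lower bound) approximately 0.608π; in particular it exceeds 3π/5. -/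
/-!
With `c = cos α ∈ [0, 1/2)` the two side lengths are `arccos (c / (1 - c))` and
`arccos (-c / (1 + c))`. Their sum exceeds its limit `arccos (-1/3)` at `c = 1/2`: comparing the
cosines of `arccos (-1/3) - arccos (-c / (1 + c))` and of `arccos (c / (1 - c))` reduces this to
`c² (1 + 2c) < 2 (1 - c)²`, i.e. `(1 - 2c)(c² + 2) > 0`. Finally
`arccos (-1/3) = π/2 + arcsin (1/3) > 0.608 π` because `sin (0.108 π) < 1/3` by the Taylor bound
for sine.
-/

open Real

theorem sphericalSide_three (α : ℝ) : sphericalSide 3 α = arccos (cos α / (1 - cos α)) := by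
  have hcos : cos (2 * π / 3) = -(1 / 2) := by
    rw [show 2 * π / 3 = π - π / 3 by ring, cos_pi_sub, cos_pi_div_three]
  rw [sphericalSide, Nat.cast_ofNat, hcos, cos_sq, sin_sq_eq_half_sub,
    mul_div_cancel₀ α two_ne_zero,
    show -(1 / 2) + (1 / 2 + cos α / 2) = cos α / 2 by ring,
    show 1 / 2 - cos α / 2 = (1 - cos α) / 2 by ring, div_div_div_cancel_right₀ two_ne_zero]

theorem arccos_lt_arccos_add_arccos {a b c : ℝ} (ha : -1 ≤ a) (hab : a ≤ b) (hb : b ≤ 1)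
    (hc : -1 ≤ c) (h : c - a * b < √((1 - a ^ 2) * (1 - b ^ 2))) :
    arccos a < arccos b + arccos c := by
  have hcos : cos (arccos a - arccos b) = a * b + √((1 - a ^ 2) * (1 - b ^ 2)) := by
    rw [cos_sub, sin_arccos, sin_arccos, cos_arccos ha (hab.trans hb),
      cos_arccos (ha.trans hab) hb, sqrt_mul (by nlinarith)]
  have hdiff : arccos a - arccos b ≤ π := by linarith [arccos_le_pi a, arccos_nonneg b]
  have hlt : arccos a - arccos b < arccos c := by
    rw [← arccos_cos (sub_nonneg.2 (arccos_le_arccos hab)) hdiff]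
    exact arccos_lt_arccos hc (by linarith) (hcos ▸ cos_le_one _)
  linarith

theorem arccos_neg_one_third_lt {c : ℝ} (hc₀ : -(1 / 2) < c) (hc₁ : c < 1 / 2) :
    arccos (-(1 / 3)) < arccos (c / (1 - c)) + arccos (-c / (1 + c)) := by
  have h1c : 0 < 1 - c := by linarith
  have hc1 : 0 < 1 + c := by linarith
  have hprod : c / (1 - c) - -(1 / 3) * (-c / (1 + c)) =
      2 * c * (1 + 2 * c) / (3 * ((1 - c) * (1 + c))) := by
    field_simp; ring
  have hrad : (1 - (-(1 / 3)) ^ 2) * (1 - (-c / (1 + c)) ^ 2) =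
      8 * (1 + 2 * c) / (9 * (1 + c) ^ 2) := by
    field_simp; ring
  have hkey : c ^ 2 * (1 + 2 * c) < 2 * (1 - c) ^ 2 := by
    nlinarith [mul_pos (show 0 < 1 - 2 * c by linarith) (show 0 < c ^ 2 + 2 by positivity)]
  rw [add_comm]
  apply arccos_lt_arccos_add_arccos (by norm_num) _ _ _
  · rw [hprod, hrad]
    apply lt_sqrt_of_sq_lt
    rw [div_pow, div_lt_div_iff₀ (by positivity) (by positivity)]
    have hpos : 0 < 36 * (1 + c) ^ 2 * (1 + 2 * c) := by
      have : 0 < 1 + 2 * c := by linarith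
      positivity
    nlinarith [mul_lt_mul_of_pos_left hkey hpos]
  · rw [le_div_iff₀ hc1]; linarith
  · rw [div_le_one hc1]; linarith
  · rw [le_div_iff₀ h1c]; linarith

theorem mul_pi_lt_arccos_neg_one_third : 0.608 * π < arccos (-(1 / 3)) := by
  have hπl := pi_gt_d6
  have hπu := pi_lt_d6
  set x := 0.108 * π with hx
  have hxl : 0.3392919 ≤ x := by rw [hx]; linarith
  have hxu : x ≤ 0.3392921 := by rw [hx]; linarith
  have hsin : sin x < 1 / 3 := by
    have hx0 : 0 ≤ x := by linarith
    have hb := sin_bound (x := x) (by rw [abs_of_nonneg hx0]; linarith)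
    rw [abs_of_nonneg hx0] at hb
    have h3 := pow_le_pow_left₀ (by norm_num) hxl 3
    have h5 := pow_le_pow_left₀ hx0 hxu 5
    linarith [(abs_le.1 hb).2]
  have harcsin : x < arcsin (1 / 3) :=
    (lt_arcsin_iff_sin_lt ⟨by linarith, by linarith⟩ ⟨by norm_num, by norm_num⟩).2 hsin
  rw [arccos_eq_pi_div_two_sub_arcsin, arcsin_neg]
  linarith

/-- The total side length of two regular spherical triangles with supplementary angles
`α` and `π - α`, for `π/3 < α ≤ π/2`, exceeds `0.608π`; in particular it exceeds
`3π/5`. -/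
theorem supp_triangle_pair_length (α : ℝ)
    (h₁ : Real.pi / 3 < α) (h₂ : α ≤ Real.pi / 2) :
    0.608 * Real.pi < sphericalSide 3 α + sphericalSide 3 (Real.pi - α) ∧
      3 * Real.pi / 5 < sphericalSide 3 α + sphericalSide 3 (Real.pi - α) := by
  have hcos₀ : 0 ≤ cos α := cos_nonneg_of_mem_Icc ⟨by linarith [pi_pos], h₂⟩
  have hcos₁ : cos α < 1 / 2 := by
    rw [← cos_pi_div_three]
    exact cos_lt_cos_of_nonneg_of_le_pi (by positivity) (by linarith) h₁
  have hsum : arccos (-(1 / 3)) < sphericalSide 3 α + sphericalSide 3 (π - α) := by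
    rw [sphericalSide_three, sphericalSide_three, cos_pi_sub, sub_neg_eq_add]
    exact arccos_neg_one_third_lt (by linarith) hcos₁
  have hbound := mul_pi_lt_arccos_neg_one_third
  constructor <;> linarith [pi_pos]
end
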